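/- arXiv:2412.04928 — 3 statements merged into one kernel-verified Lean document; each statement's English description precedes it below -/
import Mathlib

section
/- For any Hahn series f, one has val L(f) ≥ ψ(val f), and if val f is not the opposite of a slope of L (i.e., val f ∉ −S(L)), then val L(f) = ψ(val f). -/
open Polynomial Finset

noncomputable def PL {K : Type*} [Field K] (ℓ n : ℕ) (a : ℕ → Polynomial K) : Finset (ℚ × ℚ) :=
  (Finset.range (n + 1)).biUnion fun i =>
    (a i).support.image fun j : ℕ => ((ℓ : ℚ) ^ i, (j : ℚ))

noncomputable def PsiSet {K : Type*} [Field K] (ℓ n : ℕ) (a : ℕ → Polynomial K) (v : ℚ) :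
    Finset ℚ :=
  (PL ℓ n a).image fun p => v * p.1 + p.2

noncomputable def psi {K : Type*} [Field K] (ℓ n : ℕ) (a : ℕ → Polynomial K) (v : ℚ) : ℚ :=
  WithTop.untopD 0 ((PsiSet ℓ n a v).min)

noncomputable def piF {K : Type*} [Field K] (ℓ n : ℕ) (a : ℕ → Polynomial K) (q : ℚ) : ℚ :=
  WithBot.unbotD 0 (((PL ℓ n a).image fun p => (q - p.2) / p.1).max)

def slopeSet {K : Type*} [Field K] (ℓ n : ℕ) (a : ℕ → Polynomial K) : Set ℚ :=
  {μ | ∃ b : ℚ,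
    (∃ p ∈ PL ℓ n a, ∃ q ∈ PL ℓ n a, p ≠ q ∧ p.2 - μ * p.1 = b ∧ q.2 - μ * q.1 = b) ∧
    ∀ p ∈ PL ℓ n a, b ≤ p.2 - μ * p.1}

noncomputable def scaleEmb (ℓ : ℕ) (hℓ : 2 ≤ ℓ) (i : ℕ) : ℚ ↪o ℚ :=
  (OrderIso.mulLeft₀ ((ℓ : ℚ) ^ i)
    (pow_pos (by exact_mod_cast Nat.lt_of_lt_of_le Nat.zero_lt_two hℓ) i)).toOrderEmbedding

noncomputable def mahlerOp {K : Type*} [Field K] (ℓ : ℕ) (hℓ : 2 ≤ ℓ) (n : ℕ)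
    (a : ℕ → Polynomial K) (f : HahnSeries ℚ K) : HahnSeries ℚ K :=
  ∑ i ∈ Finset.range (n + 1),
    (HahnSeries.ofPowerSeries ℚ K (a i : PowerSeries K)) *
      HahnSeries.embDomain (scaleEmb ℓ hℓ i) f

/-! Write `v = val f`. Since `φⁱ` multiplies valuations by `ℓⁱ`, the `i`-th term `aᵢ φⁱ(f)` of
`L(f)` has valuation `val aᵢ + ℓⁱ v`, and `ψ(v)` is the least of these numbers. So `val L(f) ≥ ψ(v)`
by the ultrametric inequality, with equality as soon as the minimum is attained by a single term.
If it were attained by two terms `i ≠ j`, the line of slope `-v` through the points `(ℓⁱ, val aᵢ)`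
and `(ℓʲ, val aⱼ)` would support the Newton polygon of `L`, making `-v` a slope. -/

theorem AddValuation.map_sum_eq_of_lt {R Γ₀ ι : Type*} [Ring R]
    [LinearOrderedAddCommMonoidWithTop Γ₀] (v : AddValuation R Γ₀) [DecidableEq ι]
    {s : Finset ι} {f : ι → R} {j : ι} (hj : j ∈ s)
    (hf : ∀ i ∈ s \ {j}, v (f j) < v (f i)) : v (∑ i ∈ s, f i) = v (f j) := by
  rw [Finset.sum_eq_add_sum_sdiff_singleton_of_mem hj]
  rcases (s \ {j}).eq_empty_or_nonempty with hs | ⟨i, hi⟩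
  · rw [hs, Finset.sum_empty, add_zero]
  · exact v.map_add_eq_of_lt_left (v.map_lt_sum (hf i hi).ne_top hf)

theorem HahnSeries.orderTop_ofPowerSeries_coe {Γ R : Type*} [Semiring Γ] [LinearOrder Γ]
    [IsStrictOrderedRing Γ] [Semiring R] {p : R[X]} (hp : p ≠ 0) :
    (ofPowerSeries Γ R p).orderTop = ((p.natTrailingDegree : Γ) : WithTop Γ) := by
  apply orderTop_eq_of_le
  · rw [mem_support, ofPowerSeries_apply_coeff, Polynomial.coeff_coe]
    exact mt trailingCoeff_eq_zero.mp hp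
  · intro g hg
    rw [ofPowerSeries_apply] at hg
    obtain ⟨m, hm, rfl⟩ := support_embDomain_subset hg
    rw [mem_support, coeff_toPowerSeries_symm, Polynomial.coeff_coe] at hm
    exact Nat.cast_le.mpr (natTrailingDegree_le_of_ne_zero hm)

section NewtonPolygon

variable {K : Type*} [Field K] {ℓ n : ℕ} {a : ℕ → K[X]}

theorem trailing_mem_PL {i : ℕ} (hi : i ≤ n) (hai : a i ≠ 0) :
    ((ℓ : ℚ) ^ i, ((a i).natTrailingDegree : ℚ)) ∈ PL ℓ n a :=
  mem_biUnion.mpr ⟨i, mem_range.mpr (Nat.lt_succ_of_le hi),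
    mem_image_of_mem _ (natTrailingDegree_mem_support_of_nonzero hai)⟩

theorem psi_le (v : ℚ) {p : ℚ × ℚ} (hp : p ∈ PL ℓ n a) : psi ℓ n a v ≤ v * p.1 + p.2 := by
  have hmem : v * p.1 + p.2 ∈ PsiSet ℓ n a v := mem_image_of_mem _ hp
  obtain ⟨m, hm⟩ := min_of_mem hmem
  have hle := hm ▸ min_le hmem
  rw [psi, hm, WithTop.untopD_coe]
  exact WithTop.coe_le_coe.mp hle

theorem exists_psi_eq (h : (PL ℓ n a).Nonempty) (v : ℚ) :
    ∃ p ∈ PL ℓ n a, psi ℓ n a v = v * p.1 + p.2 := by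
  obtain ⟨m, hm⟩ := min_of_nonempty (h.image fun p : ℚ × ℚ => v * p.1 + p.2)
  obtain ⟨p, hp, rfl⟩ := mem_image.mp (mem_of_min hm)
  exact ⟨p, hp, by rw [psi, PsiSet, hm, WithTop.untopD_coe]⟩

theorem exists_psi_eq_trailing (h : (PL ℓ n a).Nonempty) (v : ℚ) :
    ∃ i ≤ n, a i ≠ 0 ∧ psi ℓ n a v = v * (ℓ : ℚ) ^ i + (a i).natTrailingDegree := by
  obtain ⟨p, hp, hψ⟩ := exists_psi_eq h v
  obtain ⟨i, hi, hp⟩ := mem_biUnion.mp hp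
  obtain ⟨j, hj, rfl⟩ := mem_image.mp hp
  have hai : a i ≠ 0 := by rintro h; simp [h] at hj
  have hi : i ≤ n := Nat.lt_succ_iff.mp (mem_range.mp hi)
  have htj : ((a i).natTrailingDegree : ℚ) ≤ j := by
    exact_mod_cast natTrailingDegree_le_of_mem_supp j hj
  refine ⟨i, hi, hai, le_antisymm (psi_le v (trailing_mem_PL hi hai)) ?_⟩
  rw [hψ]
  exact add_le_add_right htj _

theorem neg_mem_slopeSet_of_psi_eq {v : ℚ} {p q : ℚ × ℚ} (hp : p ∈ PL ℓ n a)
    (hq : q ∈ PL ℓ n a) (hpq : p ≠ q) (hpψ : psi ℓ n a v = v * p.1 + p.2)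
    (hqψ : psi ℓ n a v = v * q.1 + q.2) : -v ∈ slopeSet ℓ n a :=
  ⟨psi ℓ n a v, ⟨p, hp, q, hq, hpq, by linarith, by linarith⟩,
    fun r hr => by linarith [psi_le v hr]⟩

theorem psi_lt_of_neg_notMem_slopeSet (hℓ : 1 < ℓ) {v : ℚ} (hv : -v ∉ slopeSet ℓ n a)
    {i j : ℕ} (hi : i ≤ n) (hj : j ≤ n) (hij : i ≠ j) (hai : a i ≠ 0) (haj : a j ≠ 0)
    (hψ : psi ℓ n a v = v * (ℓ : ℚ) ^ j + (a j).natTrailingDegree) :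
    psi ℓ n a v < v * (ℓ : ℚ) ^ i + (a i).natTrailingDegree := by
  refine (psi_le v (trailing_mem_PL hi hai)).lt_of_ne fun hiψ => hv ?_
  refine neg_mem_slopeSet_of_psi_eq (trailing_mem_PL hi hai) (trailing_mem_PL hj haj)
    (fun h => hij ?_) hiψ hψ
  exact (pow_right_strictMono₀ (by exact_mod_cast hℓ : (1 : ℚ) < ℓ)).injective (congrArg Prod.fst h)

end NewtonPolygon

section MahlerOperator

open HahnSeries

variable {K : Type*} [Field K] {ℓ n : ℕ} (hℓ : 2 ≤ ℓ) {a : ℕ → K[X]} {f : HahnSeries ℚ K} {v : ℚ}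

theorem orderTop_mahlerOp_term (hf : f.orderTop = v) {i : ℕ} (hai : a i ≠ 0) :
    (ofPowerSeries ℚ K (a i) * embDomain (scaleEmb ℓ hℓ i) f).orderTop =
      ((v * (ℓ : ℚ) ^ i + (a i).natTrailingDegree : ℚ) : WithTop ℚ) := by
  rw [orderTop_mul, orderTop_embDomain, hf, WithTop.map_coe, orderTop_ofPowerSeries_coe hai,
    ← WithTop.coe_add, add_comm]
  exact congrArg (fun w : ℚ => ((w + (a i).natTrailingDegree : ℚ) : WithTop ℚ)) (mul_comm _ _)

theorem psi_le_orderTop_mahlerOp (hf : f.orderTop = v) :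
    (psi ℓ n a v : WithTop ℚ) ≤ (mahlerOp ℓ hℓ n a f).orderTop := by
  rw [mahlerOp, ← addVal_apply]
  refine AddValuation.map_le_sum _ fun i hi => ?_
  rw [addVal_apply]
  rcases eq_or_ne (a i) 0 with hai | hai
  · simp [hai]
  · rw [orderTop_mahlerOp_term hℓ hf hai]
    exact WithTop.coe_le_coe.mpr
      (psi_le v (trailing_mem_PL (Nat.lt_succ_iff.mp (mem_range.mp hi)) hai))

theorem orderTop_mahlerOp_eq_psi (hPL : (PL ℓ n a).Nonempty) (hf : f.orderTop = v)
    (hv : -v ∉ slopeSet ℓ n a) : (mahlerOp ℓ hℓ n a f).orderTop = psi ℓ n a v := by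
  classical
  obtain ⟨j, hj, haj, hψ⟩ := exists_psi_eq_trailing hPL v
  rw [mahlerOp, ← addVal_apply,
    AddValuation.map_sum_eq_of_lt _ (mem_range.mpr (Nat.lt_succ_of_le hj)), addVal_apply,
    orderTop_mahlerOp_term hℓ hf haj, hψ]
  intro i hi
  obtain ⟨hi, hij⟩ := mem_sdiff.mp hi
  rw [addVal_apply, addVal_apply, orderTop_mahlerOp_term hℓ hf haj, ← hψ]
  rcases eq_or_ne (a i) 0 with hai | hai
  · simp [hai]
  · rw [orderTop_mahlerOp_term hℓ hf hai]
    exact WithTop.coe_lt_coe.mpr (psi_lt_of_neg_notMem_slopeSet hℓ hv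
      (Nat.lt_succ_iff.mp (mem_range.mp hi)) hj (by simpa using hij) hai haj hψ)

end MahlerOperator

theorem stmt3_general {K : Type*} [Field K] (ℓ n : ℕ) (hℓ : 2 ≤ ℓ) (a : ℕ → Polynomial K)
    (h0 : a 0 ≠ 0) (f : HahnSeries ℚ K) :
    WithTop.map (psi ℓ n a) f.orderTop ≤ (mahlerOp ℓ hℓ n a f).orderTop ∧
    ((∀ μ ∈ slopeSet ℓ n a, f.orderTop ≠ ((-μ : ℚ) : WithTop ℚ)) →
      (mahlerOp ℓ hℓ n a f).orderTop = WithTop.map (psi ℓ n a) f.orderTop) := by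
  rcases eq_or_ne f 0 with rfl | hf
  · simp [mahlerOp]
  obtain ⟨v, hv⟩ := WithTop.ne_top_iff_exists.mp (HahnSeries.orderTop_ne_top.mpr hf)
  rw [← hv, WithTop.map_coe]
  refine ⟨psi_le_orderTop_mahlerOp hℓ hv.symm, fun hslope => ?_⟩
  exact orderTop_mahlerOp_eq_psi hℓ ⟨_, trailing_mem_PL (Nat.zero_le n) h0⟩ hv.symm
    fun hmem => hslope _ hmem (by rw [neg_neg])

theorem stmt3 {K : Type*} [Field K] (ℓ n : ℕ) (hℓ : 2 ≤ ℓ) (a : ℕ → Polynomial K)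
    (h0 : a 0 ≠ 0) (hn : a n ≠ 0) (f : HahnSeries ℚ K) :
    WithTop.map (psi ℓ n a) f.orderTop ≤ (mahlerOp ℓ hℓ n a f).orderTop ∧
    ((∀ μ ∈ slopeSet ℓ n a, f.orderTop ≠ ((-μ : ℚ) : WithTop ℚ)) →
      (mahlerOp ℓ hℓ n a f).orderTop = WithTop.map (psi ℓ n a) f.orderTop) :=
  stmt3_general ℓ n hℓ a h0 f
end

section
/- Two Hahn series solutions f, g of the Mahler equation L(y) = a_{-∞} are equal if and only if their restrictions to the finite index set −S(L) are equal, i.e., f_γ = g_γ for all γ ∈ −S(L) implies f = g. -/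
open Polynomial Finset

/-!
If `f ≠ g`, then `h = f - g` is a nonzero solution of `L(h) = 0`; let `γ` be its order. The
coefficient of `z ^ b` in `L(h)` collects the contributions `a_{i,j} h_{(b - j) / ℓ ^ i}` of the
monomials `z ^ j φ ^ i` of `L`, and those with `j + γ ℓ ^ i > b` vanish. For `b` the minimum of
`j + γ ℓ ^ i` over the Newton polygon points `(ℓ ^ i, j)`, a unique minimiser would make this
coefficient `a_{i,j} h_γ ≠ 0`. So the minimum is attained twice, i.e. `-γ` is a slope, and then
`h_γ = f_γ - g_γ = 0` contradicts the choice of `γ`.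
-/

namespace HahnSeries

theorem ofPowerSeries_polynomial {Γ R : Type*} [Semiring Γ] [PartialOrder Γ]
    [IsStrictOrderedRing Γ] [CommSemiring R] (p : R[X]) :
    ofPowerSeries Γ R (p : PowerSeries R) = ∑ j ∈ p.support, single (j : Γ) (p.coeff j) := by
  rw [← Polynomial.coeToPowerSeries.ringHom_apply, ← RingHom.comp_apply]
  conv_lhs => rw [p.as_sum_support_C_mul_X_pow]
  simp [HahnSeries.C, single_pow]

end HahnSeries

section MahlerOperator

variable {K : Type*} [Field K] {ℓ n : ℕ} {a : ℕ → K[X]}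

/-- The pairs `(i, j)` such that the monomial `z ^ j φ ^ i` occurs in `L`. -/
def mahlerSupport (n : ℕ) (a : ℕ → K[X]) : Finset (Σ _ : ℕ, ℕ) :=
  (range (n + 1)).sigma fun i => (a i).support

def newtonPoint (ℓ : ℕ) (x : Σ _ : ℕ, ℕ) : ℚ × ℚ :=
  ((ℓ : ℚ) ^ x.1, (x.2 : ℚ))

theorem newtonPoint_injective (hℓ : 2 ≤ ℓ) : Function.Injective (newtonPoint ℓ) := by
  rintro ⟨i, j⟩ ⟨i', j'⟩ h
  simp only [newtonPoint, Prod.mk.injEq, Nat.cast_inj] at h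
  obtain ⟨hi, rfl⟩ := h
  obtain rfl := Nat.pow_right_injective hℓ (by exact_mod_cast hi : ℓ ^ i = ℓ ^ i')
  rfl

theorem PL_eq_image_newtonPoint : PL ℓ n a = (mahlerSupport n a).image (newtonPoint ℓ) := by
  ext p
  simp [PL, mahlerSupport, newtonPoint, and_assoc]

theorem PL_nonempty (hn : a n ≠ 0) : (PL ℓ n a).Nonempty := by
  obtain ⟨j, hj⟩ := Polynomial.support_nonempty.mpr hn
  rw [PL_eq_image_newtonPoint]
  have hx : (⟨n, j⟩ : Σ _ : ℕ, ℕ) ∈ mahlerSupport n a := mem_sigma.2 ⟨self_mem_range_succ n, hj⟩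
  exact ⟨_, mem_image_of_mem _ hx⟩

theorem exists_forall_lt_of_notMem_slopeSet {μ : ℚ} (hne : (PL ℓ n a).Nonempty)
    (hμ : μ ∉ slopeSet ℓ n a) :
    ∃ p₀ ∈ PL ℓ n a, ∀ p ∈ PL ℓ n a, p ≠ p₀ → p₀.2 - μ * p₀.1 < p.2 - μ * p.1 := by
  obtain ⟨p₀, hp₀, hmin⟩ := exists_min_image (PL ℓ n a) (fun p => p.2 - μ * p.1) hne
  refine ⟨p₀, hp₀, fun p hp hne => (hmin p hp).lt_of_ne fun heq => hμ ?_⟩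
  exact ⟨_, ⟨p, hp, p₀, hp₀, hne, heq.symm, rfl⟩, hmin⟩

variable {hℓ : 2 ≤ ℓ}

theorem coeff_embDomain_scaleEmb (i : ℕ) (f : HahnSeries ℚ K) (q : ℚ) :
    (HahnSeries.embDomain (scaleEmb ℓ hℓ i) f).coeff q = f.coeff (q / (ℓ : ℚ) ^ i) := by
  have hℓ0 : (ℓ : ℚ) ≠ 0 := by exact_mod_cast (by omega : ℓ ≠ 0)
  have h : scaleEmb ℓ hℓ i (q / (ℓ : ℚ) ^ i) = q := mul_div_cancel₀ q (pow_ne_zero i hℓ0)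
  rw [← h, HahnSeries.embDomain_coeff, h]

theorem coeff_mahlerOp (f : HahnSeries ℚ K) (b : ℚ) :
    (mahlerOp ℓ hℓ n a f).coeff b =
      ∑ x ∈ mahlerSupport n a, (a x.1).coeff x.2 * f.coeff ((b - x.2) / (ℓ : ℚ) ^ x.1) := by
  simp only [mahlerOp, mahlerSupport, sum_sigma, HahnSeries.coeff_sum,
    HahnSeries.ofPowerSeries_polynomial, sum_mul, HahnSeries.coeff_single_mul,
    coeff_embDomain_scaleEmb]

theorem mahlerOp_sub (f g : HahnSeries ℚ K) :
    mahlerOp ℓ hℓ n a (f - g) = mahlerOp ℓ hℓ n a f - mahlerOp ℓ hℓ n a g := by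
  simp only [mahlerOp, ← sum_sub_distrib, ← mul_sub]
  exact sum_congr rfl fun i _ => congrArg _ (map_sub (HahnSeries.embDomainLinearMap _) f g)

theorem coeff_mahlerOp_of_forall_lt {f : HahnSeries ℚ K} {x₀ : Σ _ : ℕ, ℕ}
    (hx₀ : x₀ ∈ mahlerSupport n a)
    (hmin : ∀ x ∈ mahlerSupport n a, x ≠ x₀ →
      (x₀.2 : ℚ) + f.order * (ℓ : ℚ) ^ x₀.1 < x.2 + f.order * (ℓ : ℚ) ^ x.1) :
    (mahlerOp ℓ hℓ n a f).coeff (x₀.2 + f.order * (ℓ : ℚ) ^ x₀.1) =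
      (a x₀.1).coeff x₀.2 * f.coeff f.order := by
  have hℓpow : ∀ i : ℕ, (0 : ℚ) < (ℓ : ℚ) ^ i := fun i => pow_pos (by positivity) i
  rw [coeff_mahlerOp, sum_eq_single_of_mem x₀ hx₀]
  · rw [add_sub_cancel_left, mul_div_cancel_right₀ _ (hℓpow x₀.1).ne']
  · intro x hx hne
    refine mul_eq_zero_of_right _ (HahnSeries.coeff_eq_zero_of_lt_order ?_)
    rw [div_lt_iff₀ (hℓpow x.1)]
    linarith [hmin x hx hne]

theorem neg_order_mem_slopeSet (hn : a n ≠ 0) {f : HahnSeries ℚ K} (hf : f ≠ 0)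
    (hL : mahlerOp ℓ hℓ n a f = 0) : -f.order ∈ slopeSet ℓ n a := by
  by_contra hμ
  obtain ⟨p₀, hp₀, hmin⟩ := exists_forall_lt_of_notMem_slopeSet (PL_nonempty hn) hμ
  rw [PL_eq_image_newtonPoint] at hp₀ hmin
  obtain ⟨x₀, hx₀, rfl⟩ := mem_image.1 hp₀
  have hcoeff := coeff_mahlerOp_of_forall_lt (hℓ := hℓ) hx₀ fun x hx hne => by
    simpa [newtonPoint] using hmin _ (mem_image_of_mem _ hx) ((newtonPoint_injective hℓ).ne hne)
  rw [hL, HahnSeries.coeff_zero] at hcoeff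
  exact mul_ne_zero (mem_support_iff.1 (mem_sigma.1 hx₀).2)
    (mt HahnSeries.coeff_order_eq_zero.1 hf) hcoeff.symm

end MahlerOperator

theorem stmt5_general {K : Type*} [Field K] (ℓ n : ℕ) (hℓ : 2 ≤ ℓ) (a : ℕ → Polynomial K)
    (hn : a n ≠ 0) (ainf f g : HahnSeries ℚ K)
    (hf : mahlerOp ℓ hℓ n a f = ainf) (hg : mahlerOp ℓ hℓ n a g = ainf) :
    f = g ↔ ∀ γ : ℚ, -γ ∈ slopeSet ℓ n a → f.coeff γ = g.coeff γ := by
  refine ⟨fun hfg _ _ => hfg ▸ rfl, fun hcoeff => ?_⟩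
  by_contra hne
  have hsub : f - g ≠ 0 := sub_ne_zero.2 hne
  have hslope : -(f - g).order ∈ slopeSet ℓ n a :=
    neg_order_mem_slopeSet (hℓ := hℓ) hn hsub (by rw [mahlerOp_sub, hf, hg, sub_self])
  refine hsub (HahnSeries.coeff_order_eq_zero.1 ?_)
  rw [HahnSeries.coeff_sub, hcoeff _ hslope, sub_self]

theorem stmt5 {K : Type*} [Field K] (ℓ n : ℕ) (hℓ : 2 ≤ ℓ) (a : ℕ → Polynomial K)
    (h0 : a 0 ≠ 0) (hn : a n ≠ 0) (ainf f g : HahnSeries ℚ K)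
    (hf : mahlerOp ℓ hℓ n a f = ainf) (hg : mahlerOp ℓ hℓ n a g = ainf) :
    f = g ↔ ∀ γ : ℚ, -γ ∈ slopeSet ℓ n a → f.coeff γ = g.coeff γ :=
  stmt5_general ℓ n hℓ a hn ainf f g hf hg
end

section
/- If q ∈ ℚ satisfies −μ_k ≤ π(q) ≤ −μ_{k−1} for some k ∈ {1,...,κ+1} (with μ_0 = −∞, μ_{κ+1} = +∞), then π(q) = (q − β_{k−1}) / ℓ^{α_{k−1}}, where (ℓ^{α_{k−1}}, β_{k−1}) is the (k−1)-th vertex of the Newton polygon N(L). -/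
open Polynomial Finset

def Minimizes {K : Type*} [Field K] (ℓ n : ℕ) (a : ℕ → Polynomial K) (μ : ℚ)
    (p : ℚ × ℚ) : Prop :=
  p ∈ PL ℓ n a ∧ ∀ q ∈ PL ℓ n a, p.2 - μ * p.1 ≤ q.2 - μ * q.1

/-
Since every abscissa `ℓ ^ i` is positive, `π(q) ≥ (q - y) / x` on `P(L)`, with equality exactly
at the points minimizing `y + π(q) x`, i.e. supporting `P(L)` at slope `-π(q)`. So it suffices to
show that the vertex `p (k - 1)` supports `P(L)` at `-π(q)`. It is the rightmost supporting point at
`μ (k - 1)` (the leftmost at `μ 1` when `k = 1`), and the hypotheses place `-π(q)` in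
`[μ (k - 1), μ k]` (in `(-∞, μ 1]`), an interval containing no slope of `N(L)` in its interior; a
vertex keeps supporting as the slope moves until it crosses the slope of an edge through it.
-/

namespace LowerHull

variable {𝕜 : Type*} [Field 𝕜]

def edgeSlope (v w : 𝕜 × 𝕜) : 𝕜 := (w.2 - v.2) / (w.1 - v.1)

theorem sub_mul_eq_sub_mul_edgeSlope {v w : 𝕜 × 𝕜} (h : v.1 ≠ w.1) :
    v.2 - edgeSlope v w * v.1 = w.2 - edgeSlope v w * w.1 := by
  have : w.1 - v.1 ≠ 0 := sub_ne_zero.2 h.symm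
  rw [edgeSlope]
  field_simp
  ring

def negFst : 𝕜 × 𝕜 ≃ 𝕜 × 𝕜 := (Equiv.neg 𝕜).prodCongr (Equiv.refl 𝕜)

variable [LinearOrder 𝕜]

/-- `Minimizes ℓ n a` is `SupportsAt (PL ℓ n a)` by definition. -/
def SupportsAt (P : Finset (𝕜 × 𝕜)) (μ : 𝕜) (v : 𝕜 × 𝕜) : Prop :=
  v ∈ P ∧ ∀ w ∈ P, v.2 - μ * v.1 ≤ w.2 - μ * w.1

variable {P : Finset (𝕜 × 𝕜)}

theorem supportsAt_map_negFst {μ : 𝕜} {v : 𝕜 × 𝕜} :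
    SupportsAt (P.map negFst.toEmbedding) (-μ) v ↔ SupportsAt P μ (negFst.symm v) := by
  unfold SupportsAt
  rw [Finset.mem_map_equiv, Finset.forall_mem_map]
  simp [negFst, sub_eq_add_neg]

theorem SupportsAt.of_edgeSlope_eq {t : 𝕜} {v w : 𝕜 × 𝕜} (hv : SupportsAt P t v) (hw : w ∈ P)
    (hvw : v.1 ≠ w.1) (ht : t = edgeSlope v w) : SupportsAt P t w :=
  ⟨hw, fun u hu => by rw [ht, ← sub_mul_eq_sub_mul_edgeSlope hvw, ← ht]; exact hv.2 u hu⟩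

variable [IsStrictOrderedRing 𝕜]

theorem sub_mul_le_sub_mul_iff_le_edgeSlope {v w : 𝕜 × 𝕜} (h : v.1 < w.1) (t : 𝕜) :
    v.2 - t * v.1 ≤ w.2 - t * w.1 ↔ t ≤ edgeSlope v w := by
  rw [edgeSlope, le_div_iff₀ (sub_pos.2 h)]
  constructor <;> intro <;> linarith

theorem SupportsAt.sub_mul_le_of_fst_le {μ₀ t : 𝕜} {v w : 𝕜 × 𝕜}
    (hv : SupportsAt P μ₀ v) (ht : μ₀ ≤ t) (hw : w ∈ P) (hwv : w.1 ≤ v.1) :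
    v.2 - t * v.1 ≤ w.2 - t * w.1 := by
  nlinarith [hv.2 w hw, mul_nonneg (sub_nonneg.2 ht) (sub_nonneg.2 hwv)]

theorem SupportsAt.iff_forall_le_edgeSlope {μ₀ t : 𝕜} {v : 𝕜 × 𝕜}
    (hv : SupportsAt P μ₀ v) (ht : μ₀ ≤ t) :
    SupportsAt P t v ↔ ∀ w ∈ P.filter (v.1 < ·.1), t ≤ edgeSlope v w := by
  refine ⟨fun h w hw => ?_, fun h => ⟨hv.1, fun w hw => ?_⟩⟩
  · rw [Finset.mem_filter] at hw
    exact (sub_mul_le_sub_mul_iff_le_edgeSlope hw.2 t).1 (h.2 w hw.1)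
  · rcases le_or_gt w.1 v.1 with hwv | hvw
    · exact hv.sub_mul_le_of_fst_le ht hw hwv
    · exact (sub_mul_le_sub_mul_iff_le_edgeSlope hvw t).2 (h w (Finset.mem_filter.2 ⟨hw, hvw⟩))

/-- As `μ` increases, the rightmost supporting vertex keeps supporting until `μ` reaches the
smallest slope `t₀` of an edge leaving it to the right, where a second vertex starts to support. -/
theorem SupportsAt.of_rightmost {μ₀ μ : 𝕜} {v : 𝕜 × 𝕜}
    (hv : SupportsAt P μ₀ v) (hright : ∀ w, SupportsAt P μ₀ w → w.1 ≤ v.1) (hle : μ₀ ≤ μ)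
    (hunique : ∀ t, μ₀ < t → t < μ → ∀ w, SupportsAt P t v → SupportsAt P t w → w = v) :
    SupportsAt P μ v := by
  set R := P.filter (v.1 < ·.1)
  rcases R.eq_empty_or_nonempty with hR | hR
  · exact (hv.iff_forall_le_edgeSlope hle).2 fun w hw => (Finset.notMem_empty w (hR ▸ hw)).elim
  set t₀ := R.inf' hR (edgeSlope v)
  have hlt : μ₀ < t₀ := by
    refine (Finset.lt_inf'_iff hR).2 fun w hw => ?_
    have hw' := Finset.mem_filter.1 hw
    refine ((hv.iff_forall_le_edgeSlope le_rfl).1 hv w hw).lt_of_ne fun heq => ?_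
    exact (hright w (hv.of_edgeSlope_eq hw'.1 hw'.2.ne heq)).not_gt hw'.2
  have hv₀ : SupportsAt P t₀ v := (hv.iff_forall_le_edgeSlope hlt.le).2 fun w hw => R.inf'_le _ hw
  obtain ⟨w₀, hw₀, ht₀⟩ := R.exists_mem_eq_inf' hR (edgeSlope v)
  have hw₀' := Finset.mem_filter.1 hw₀
  refine (hv.iff_forall_le_edgeSlope hle).2 fun w hw => le_trans ?_ (R.inf'_le _ hw)
  by_contra! hμ
  have := hunique t₀ hlt hμ w₀ hv₀ (hv₀.of_edgeSlope_eq hw₀'.1 hw₀'.2.ne ht₀)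
  exact hw₀'.2.ne (congrArg Prod.fst this).symm

theorem SupportsAt.of_leftmost {μ₀ μ : 𝕜} {v : 𝕜 × 𝕜}
    (hv : SupportsAt P μ₀ v) (hleft : ∀ w, SupportsAt P μ₀ w → v.1 ≤ w.1) (hle : μ ≤ μ₀)
    (hunique : ∀ t, μ < t → t < μ₀ → ∀ w, SupportsAt P t v → SupportsAt P t w → w = v) :
    SupportsAt P μ v := by
  have hflip := SupportsAt.of_rightmost (P := P.map negFst.toEmbedding) (v := negFst v)
    (μ₀ := -μ₀) (μ := -μ) (by simpa [supportsAt_map_negFst]) (fun w hw => ?_) (neg_le_neg hle)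
    (fun t _ _ w hvt hwt => ?_)
  · simpa [supportsAt_map_negFst] using hflip
  · have := hleft _ (supportsAt_map_negFst.1 hw)
    simp [negFst] at this ⊢
    linarith
  · rw [← neg_neg t, supportsAt_map_negFst] at hvt hwt
    rw [Equiv.symm_apply_apply] at hvt
    have := hunique (-t) (by linarith) (by linarith) _ hvt hwt
    rw [← this, Equiv.apply_symm_apply]

end LowerHull

theorem PL_fst_pos {K : Type*} [Field K] {ℓ n : ℕ} (hℓ : 2 ≤ ℓ) {a : ℕ → Polynomial K}
    {v : ℚ × ℚ} (hv : v ∈ PL ℓ n a) : 0 < v.1 := by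
  simp only [PL, Finset.mem_biUnion, Finset.mem_image] at hv
  obtain ⟨i, -, j, -, rfl⟩ := hv
  exact pow_pos (by exact_mod_cast Nat.lt_of_lt_of_le Nat.zero_lt_two hℓ) i

theorem piF_eq_max' {K : Type*} [Field K] {ℓ n : ℕ} {a : ℕ → Polynomial K}
    (hne : (PL ℓ n a).Nonempty) (q : ℚ) :
    piF ℓ n a q = ((PL ℓ n a).image fun v => (q - v.2) / v.1).max' (hne.image _) := by
  rw [piF, ← Finset.coe_max' (hne.image _)]
  rfl

theorem le_piF {K : Type*} [Field K] {ℓ n : ℕ} {a : ℕ → Polynomial K} {v : ℚ × ℚ}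
    (hv : v ∈ PL ℓ n a) (q : ℚ) : (q - v.2) / v.1 ≤ piF ℓ n a q := by
  rw [piF_eq_max' ⟨v, hv⟩]
  exact Finset.le_max' _ _ (Finset.mem_image_of_mem (fun v : ℚ × ℚ => (q - v.2) / v.1) hv)

theorem exists_mem_PL_div_eq_piF {K : Type*} [Field K] {ℓ n : ℕ} {a : ℕ → Polynomial K}
    (hne : (PL ℓ n a).Nonempty) (q : ℚ) : ∃ r ∈ PL ℓ n a, (q - r.2) / r.1 = piF ℓ n a q := by
  rw [piF_eq_max' hne]
  exact Finset.mem_image.1 (Finset.max'_mem _ _)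

theorem piF_eq_of_minimizes {K : Type*} [Field K] {ℓ n : ℕ} (hℓ : 2 ≤ ℓ)
    {a : ℕ → Polynomial K} {q : ℚ} {v : ℚ × ℚ} (hv : Minimizes ℓ n a (-piF ℓ n a q) v) :
    piF ℓ n a q = (q - v.2) / v.1 := by
  obtain ⟨r, hr, hrq⟩ := exists_mem_PL_div_eq_piF ⟨v, hv.1⟩ q
  rw [div_eq_iff (PL_fst_pos hℓ hr).ne'] at hrq
  refine (le_piF hv.1 q).antisymm' ((le_div_iff₀ (PL_fst_pos hℓ hv.1)).2 ?_)
  linarith [hv.2 r hr]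

theorem mem_slopeSet_of_minimizes {K : Type*} [Field K] {ℓ n : ℕ} {a : ℕ → Polynomial K}
    {t : ℚ} {v w : ℚ × ℚ} (hv : Minimizes ℓ n a t v) (hw : Minimizes ℓ n a t w) (hvw : v ≠ w) :
    t ∈ slopeSet ℓ n a :=
  ⟨_, ⟨v, hv.1, w, hw.1, hvw, rfl, le_antisymm (hw.2 v hv.1) (hv.2 w hw.1)⟩, hv.2⟩

theorem stmt8_general {K : Type*} [Field K] (ℓ n : ℕ) (hℓ : 2 ≤ ℓ) (a : ℕ → Polynomial K)
    (κ : ℕ) (hκ : 1 ≤ κ) (μ : ℕ → ℚ)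
    (hmono : ∀ k l, 1 ≤ k → k < l → l ≤ κ → μ k < μ l)
    (hslopes : ∀ m : ℚ, m ∈ slopeSet ℓ n a ↔ ∃ k, 1 ≤ k ∧ k ≤ κ ∧ μ k = m)
    (p : ℕ → ℚ × ℚ)
    (hp0 : Minimizes ℓ n a (μ 1) (p 0) ∧
      ∀ q : ℚ × ℚ, Minimizes ℓ n a (μ 1) q → (p 0).1 ≤ q.1)
    (hpk : ∀ k, 1 ≤ k → k ≤ κ → Minimizes ℓ n a (μ k) (p k) ∧
      ∀ q : ℚ × ℚ, Minimizes ℓ n a (μ k) q → q.1 ≤ (p k).1)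
    (q : ℚ) (k : ℕ) (hk1 : 1 ≤ k) (hk2 : k ≤ κ + 1)
    (hlow : k ≤ κ → -(μ k) ≤ piF ℓ n a q) (hhigh : 2 ≤ k → piF ℓ n a q ≤ -(μ (k - 1))) :
    piF ℓ n a q = (q - (p (k - 1)).2) / (p (k - 1)).1 := by
  have hμ : ∀ i j, 1 ≤ i → i ≤ j → j ≤ κ → μ i ≤ μ j := fun i j hi hij hj =>
    hij.eq_or_lt.elim (fun h => h ▸ le_rfl) fun h => (hmono i j hi h hj).le
  have hslope : ∀ t v w, Minimizes ℓ n a t v → Minimizes ℓ n a t w → w ≠ v →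
      ∃ j, 1 ≤ j ∧ j ≤ κ ∧ μ j = t :=
    fun t v w hv hw hwv => (hslopes t).1 (mem_slopeSet_of_minimizes hv hw hwv.symm)
  refine piF_eq_of_minimizes hℓ ?_
  rcases hk1.eq_or_lt with rfl | hk
  · refine LowerHull.SupportsAt.of_leftmost hp0.1 hp0.2 (by linarith [hlow hκ])
      fun t _ ht w hv hw => by_contra fun hwv => ?_
    obtain ⟨j, hj1, hj2, rfl⟩ := hslope t _ _ hv hw hwv
    exact ht.not_ge (hμ 1 j le_rfl hj1 hj2)
  · obtain ⟨hmin, hright⟩ := hpk (k - 1) (by omega) (by omega)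
    refine LowerHull.SupportsAt.of_rightmost hmin hright (by linarith [hhigh hk])
      fun t ht ht' w hv hw => by_contra fun hwv => ?_
    obtain ⟨j, hj1, hj2, rfl⟩ := hslope t _ _ hv hw hwv
    rcases le_or_gt j (k - 1) with hj | hj
    · exact ht.not_ge (hμ j (k - 1) hj1 hj (by omega))
    · linarith [hlow (by omega), hμ k j (by omega) (by omega) hj2]

theorem stmt8 {K : Type*} [Field K] (ℓ n : ℕ) (hℓ : 2 ≤ ℓ) (a : ℕ → Polynomial K)
    (h0 : a 0 ≠ 0) (hn : a n ≠ 0)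
    (κ : ℕ) (hκ : 1 ≤ κ) (μ : ℕ → ℚ)
    (hmono : ∀ k l, 1 ≤ k → k < l → l ≤ κ → μ k < μ l)
    (hslopes : ∀ m : ℚ, m ∈ slopeSet ℓ n a ↔ ∃ k, 1 ≤ k ∧ k ≤ κ ∧ μ k = m)
    (p : ℕ → ℚ × ℚ)
    (hp0 : Minimizes ℓ n a (μ 1) (p 0) ∧
      ∀ q : ℚ × ℚ, Minimizes ℓ n a (μ 1) q → (p 0).1 ≤ q.1)
    (hpk : ∀ k, 1 ≤ k → k ≤ κ → Minimizes ℓ n a (μ k) (p k) ∧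
      ∀ q : ℚ × ℚ, Minimizes ℓ n a (μ k) q → q.1 ≤ (p k).1)
    (q : ℚ) (k : ℕ) (hk1 : 1 ≤ k) (hk2 : k ≤ κ + 1)
    (hlow : k ≤ κ → -(μ k) ≤ piF ℓ n a q) (hhigh : 2 ≤ k → piF ℓ n a q ≤ -(μ (k - 1))) :
    piF ℓ n a q = (q - (p (k - 1)).2) / (p (k - 1)).1 :=
  stmt8_general ℓ n hℓ a κ hκ μ hmono hslopes p hp0 hpk q k hk1 hk2 hlow hhigh
end
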